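/- Let q ≥ 1 and let k : [0,1]×[0,1] → ℝ be a continuous kernel of rank exactly q, i.e. k(s,t) = Σ_{m=1}^{q} λ_m φ_m(s)φ_m(t) with λ_1,…,λ_q > 0 and φ_1,…,φ_q : [0,1] → ℝ continuous and orthonormal in L²([0,1]). Then there exists a natural number L† such that for every L > L†, for every regular grid t_1,…,t_L ∈ [0,1], and for every L×L real matrix Θ with rank(Θ) ≤ q: if Θ_{ij} = k(t_i,t_j) for all pairs i ≠ j, then Θ_{ii} = k(t_i,t_i) for all i as well, i.e. Θ equals the matrix K_{X,L} with entries k(t_i,t_j). Equivalently, K_{X,L} is the unique matrix of rank at most q at which the functional Θ ↦ Σ_{i≠j} (k(t_i,t_j) − Θ_{ij})² vanishes. -/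

import Mathlib

/-!
On a regular grid with `L` points, `(1/L) ∑ⱼ φ_a(tⱼ) φ_b(tⱼ)` is a Riemann sum of
`∫ φ_a φ_b = δ_ab`, so for `L` large this Gram matrix stays close to the identity even after
any `q + 1` grid points are discarded. Hence for every `i` there are index tuples `r`, `c`,
avoiding `i` and each other, such that the `q × q` minor of `K = W Λ Wᵀ` (with
`W_jm = φ_m(t_j)`) on rows `r` and columns `c` is invertible. Bordering it by row and column
`i` gives `(q + 1)`-minors of `Θ` and `K` that differ only in the corner entry. Both vanish as
the ranks are at most `q`, and expanding along the first row shows that their difference is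
`(Θ_ii - K_ii)` times the invertible minor.
-/

open MeasureTheory Matrix Finset

def IsRegularGrid {L : ℕ} (t : Fin L → ℝ) : Prop :=
  ∀ j : Fin L, (j : ℝ) / L ≤ t j ∧ t j < ((j : ℝ) + 1) / L

theorem Icc_div_succ_div_subset_Icc_zero_one {L : ℕ} (j : Fin L) :
    Set.Icc ((j : ℝ) / L) ((j + 1) / L) ⊆ Set.Icc 0 1 := by
  have hL : (0 : ℝ) < L := by exact_mod_cast j.pos
  refine Set.Icc_subset_Icc (by positivity) ?_
  rw [div_le_one hL]
  exact_mod_cast j.isLt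

theorem IsRegularGrid.mem_Icc {L : ℕ} {t : Fin L → ℝ} (ht : IsRegularGrid t) (j : Fin L) :
    t j ∈ Set.Icc (0 : ℝ) 1 :=
  Icc_div_succ_div_subset_Icc_zero_one j ⟨(ht j).1, (ht j).2.le⟩

theorem integral_zero_one_eq_sum_integral_div {f : ℝ → ℝ} (hf : IntervalIntegrable f volume 0 1)
    {L : ℕ} (hL : L ≠ 0) :
    ∫ x in (0 : ℝ)..1, f x = ∑ j : Fin L, ∫ x in ((j : ℝ) / L)..((j + 1) / L), f x := by
  have hcell : ∀ j < L, IntervalIntegrable f volume ((j : ℝ) / L) (((j + 1 : ℕ) : ℝ) / L) := by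
    intro j hj
    refine hf.mono_set ?_
    rw [Set.uIcc_of_le zero_le_one, Set.uIcc_of_le (by gcongr; simp)]
    push_cast
    exact Icc_div_succ_div_subset_Icc_zero_one ⟨j, hj⟩
  have := intervalIntegral.sum_integral_adjacent_intervals hcell
  rw [Fin.sum_univ_eq_sum_range (fun j ↦ ∫ x in ((j : ℝ) / L)..((j + 1) / L), f x)]
  simpa [div_self (Nat.cast_ne_zero.mpr hL : (L : ℝ) ≠ 0)] using this.symm

theorem exists_abs_riemannSum_sub_integral_le {f : ℝ → ℝ} (hf : ContinuousOn f (Set.Icc 0 1))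
    {ε : ℝ} (hε : 0 < ε) :
    ∃ L₀ : ℕ, ∀ L : ℕ, L₀ < L → ∀ t : Fin L → ℝ, IsRegularGrid t →
      |(∑ j, f (t j)) / L - ∫ x in (0 : ℝ)..1, f x| ≤ ε := by
  obtain ⟨δ, hδ, hfδ⟩ :=
    Metric.uniformContinuousOn_iff.mp (isCompact_Icc.uniformContinuousOn_of_continuous hf) ε hε
  refine ⟨⌈1 / δ⌉₊, fun L hL t ht ↦ ?_⟩
  have hLpos : 0 < L := (Nat.zero_le _).trans_lt hL
  have hL0 : (0 : ℝ) < L := by exact_mod_cast hLpos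
  have hLδ : 1 / (L : ℝ) < δ := by
    rw [div_lt_iff₀ hL0, mul_comm, ← div_lt_iff₀ hδ]
    exact (Nat.le_ceil _).trans_lt (by exact_mod_cast hL)
  have hcell : ∀ j : Fin L,
      |f (t j) / L - ∫ x in ((j : ℝ) / L)..((j + 1) / L), f x| ≤ ε / L := by
    intro j
    have hlen : ((j : ℝ) + 1) / L - j / L = 1 / L := by ring
    have hle : (j : ℝ) / L ≤ (j + 1) / L := by linarith [one_div_pos.mpr hL0]
    have hint : IntervalIntegrable f volume ((j : ℝ) / L) ((j + 1) / L) :=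
      (hf.mono (Set.uIcc_of_le hle ▸ Icc_div_succ_div_subset_Icc_zero_one j)).intervalIntegrable
    have hbound : ∀ x ∈ Set.uIoc ((j : ℝ) / L) ((j + 1) / L), ‖f (t j) - f x‖ ≤ ε := by
      intro x hx
      rw [Set.uIoc_of_le hle] at hx
      have hdist : dist (t j) x < δ := by
        rw [Real.dist_eq, abs_sub_lt_iff]
        constructor <;> linarith [hx.1, hx.2, (ht j).1, (ht j).2]
      exact (hfδ _ (ht.mem_Icc j) _
        (Icc_div_succ_div_subset_Icc_zero_one j (Set.Ioc_subset_Icc_self hx)) hdist).le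
    have := intervalIntegral.norm_integral_le_of_norm_le_const hbound
    rwa [intervalIntegral.integral_sub intervalIntegrable_const hint,
      intervalIntegral.integral_const, smul_eq_mul, hlen, abs_of_pos (one_div_pos.mpr hL0),
      Real.norm_eq_abs, mul_one_div, one_div_mul_eq_div] at this
  calc |(∑ j, f (t j)) / L - ∫ x in (0 : ℝ)..1, f x|
      = |∑ j : Fin L, (f (t j) / L - ∫ x in ((j : ℝ) / L)..((j + 1) / L), f x)| := by
        rw [sum_sub_distrib, ← sum_div, integral_zero_one_eq_sum_integral_div
          (hf.intervalIntegrable_of_Icc zero_le_one) hLpos.ne']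
    _ ≤ ∑ _j : Fin L, ε / L := (abs_sum_le_sum_abs _ _).trans (sum_le_sum fun j _ ↦ hcell j)
    _ = ε := by simp [field]

theorem det_ne_zero_of_abs_sub_one_le {n : Type*} [Fintype n] [DecidableEq n]
    {A : Matrix n n ℝ} {η : ℝ} (hη : Fintype.card n * η < 1)
    (hA : ∀ a b, |A a b - (1 : Matrix n n ℝ) a b| ≤ η) : A.det ≠ 0 := by
  refine det_ne_zero_of_sum_row_lt_diag fun a ↦ ?_
  have hoff : ∑ b ∈ univ.erase a, ‖A a b‖ ≤ (univ.erase a).card * η := by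
    rw [← nsmul_eq_mul, ← sum_const]
    refine sum_le_sum fun b hb ↦ ?_
    simpa [one_apply_ne' (ne_of_mem_erase hb)] using hA a b
  have hdiag : 1 - η ≤ ‖A a a‖ := by
    have := hA a a
    rw [one_apply_eq, abs_le] at this
    rw [Real.norm_eq_abs]
    exact (by linarith : 1 - η ≤ A a a).trans (le_abs_self _)
  have hcard : ((univ.erase a).card : ℝ) + 1 = Fintype.card n := by
    rw [card_erase_of_mem (mem_univ a), card_univ, Nat.cast_sub (Fintype.card_pos_iff.mpr ⟨a⟩),
      Nat.cast_one, sub_add_cancel]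
  nlinarith

theorem Matrix.span_row_eq_top_of_det_transpose_mul_self_ne_zero {m : Type*} [Fintype m] {q : ℕ}
    (W : Matrix m (Fin q) ℝ) (h : (Wᵀ * W).det ≠ 0) :
    Submodule.span ℝ (Set.range W.row) = ⊤ := by
  refine Submodule.eq_top_of_finrank_eq ?_
  rw [← rank_eq_finrank_span_row, ← rank_transpose_mul_self,
    rank_of_isUnit _ ((isUnit_iff_isUnit_det _).mpr (isUnit_iff_ne_zero.mpr h)),
    Module.finrank_fin_fun, Fintype.card_fin]

theorem exists_det_ne_zero_of_span_eq_top {ι K : Type*} [Field K] {q : ℕ} {v : ι → Fin q → K}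
    (h : Submodule.span K (Set.range v) = ⊤) :
    ∃ e : Fin q → ι, (Matrix.of fun a ↦ v (e a)).det ≠ 0 := by
  obtain ⟨κ, s, -, hspan, hli⟩ := exists_linearIndependent' K v
  let σ : κ ≃ Fin q :=
    (Module.Basis.mk hli (by rw [hspan, h])).indexEquiv (Pi.basisFun K (Fin q))
  refine ⟨s ∘ σ.symm, ?_⟩
  have hunit := linearIndependent_rows_iff_isUnit.mp (hli.comp σ.symm σ.symm.injective)
  exact ((isUnit_iff_isUnit_det _).mp hunit).ne_zero

theorem exists_abs_sum_compl_sub_one_le {q : ℕ} {φ : Fin q → ℝ → ℝ}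
    (hφ : ∀ m, ContinuousOn (φ m) (Set.Icc 0 1))
    (hortho : ∀ i j, (∫ x in (0 : ℝ)..1, φ i x * φ j x) = if i = j then 1 else 0)
    (N : ℕ) {η : ℝ} (hη : 0 < η) :
    ∃ L₀ : ℕ, ∀ L : ℕ, L₀ < L → ∀ t : Fin L → ℝ, IsRegularGrid t →
      ∀ F : Finset (Fin L), F.card ≤ N → ∀ a b,
        |(∑ j ∈ Fᶜ, φ a (t j) * φ b (t j)) / L - (1 : Matrix (Fin q) (Fin q) ℝ) a b| ≤ η := by
  obtain ⟨M, hM⟩ := isCompact_Icc.exists_bound_of_continuousOn (continuousOn_pi.mpr hφ)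
  have hpair : ∀ p : Fin q × Fin q, ∃ L₀ : ℕ, ∀ L : ℕ, L₀ < L → ∀ t : Fin L → ℝ,
      IsRegularGrid t →
        |(∑ j, φ p.1 (t j) * φ p.2 (t j)) / L - (1 : Matrix (Fin q) (Fin q) ℝ) p.1 p.2|
          ≤ η / 2 := by
    intro p
    simpa [one_apply, hortho] using
      exists_abs_riemannSum_sub_integral_le ((hφ p.1).mul (hφ p.2)) (half_pos hη)
  choose L₁ hL₁ using hpair
  refine ⟨max (univ.sup L₁) ⌈2 * N * M ^ 2 / η⌉₊, fun L hL t ht F hF a b ↦ ?_⟩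
  have hL0 : (0 : ℝ) < L := by exact_mod_cast (Nat.zero_le _).trans_lt hL
  have hsmall : |∑ j ∈ F, φ a (t j) * φ b (t j)| / L ≤ η / 2 := by
    have hsum : |∑ j ∈ F, φ a (t j) * φ b (t j)| ≤ N * M ^ 2 := by
      refine (abs_sum_le_sum_abs _ _).trans ((sum_le_card_nsmul _ _ (M ^ 2) fun j _ ↦ ?_).trans ?_)
      · have hbd m : |φ m (t j)| ≤ M :=
          (norm_le_pi_norm (fun m ↦ φ m (t j)) m).trans (hM _ (ht.mem_Icc j))
        rw [abs_mul, sq]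
        exact mul_le_mul (hbd a) (hbd b) (abs_nonneg _) ((abs_nonneg _).trans (hbd a))
      · rw [nsmul_eq_mul]
        gcongr
    have hLbig : 2 * N * M ^ 2 / η < L :=
      (Nat.le_ceil _).trans_lt (by exact_mod_cast (le_max_right _ _).trans_lt hL)
    rw [div_le_iff₀ hL0]
    rw [div_lt_iff₀ hη] at hLbig
    linarith
  have hfull :=
    hL₁ (a, b) L ((le_sup (mem_univ (a, b))).trans_lt ((le_max_left _ _).trans_lt hL)) t ht
  rw [← sum_compl_add_sum F] at hfull
  calc _ = |((∑ j ∈ Fᶜ, φ a (t j) * φ b (t j) + ∑ j ∈ F, φ a (t j) * φ b (t j)) / L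
          - (1 : Matrix (Fin q) (Fin q) ℝ) a b) - (∑ j ∈ F, φ a (t j) * φ b (t j)) / L| := by
        ring_nf
    _ ≤ η / 2 + η / 2 := by
        refine (abs_sub _ _).trans (add_le_add hfull ?_)
        rwa [abs_div, abs_of_pos hL0]
    _ = η := add_halves η

theorem exists_det_eval_ne_zero_avoiding {q : ℕ} {φ : Fin q → ℝ → ℝ}
    (hφ : ∀ m, ContinuousOn (φ m) (Set.Icc 0 1))
    (hortho : ∀ i j, (∫ x in (0 : ℝ)..1, φ i x * φ j x) = if i = j then 1 else 0) (N : ℕ) :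
    ∃ L₀ : ℕ, ∀ L : ℕ, L₀ < L → ∀ t : Fin L → ℝ, IsRegularGrid t →
      ∀ F : Finset (Fin L), F.card ≤ N →
        ∃ e : Fin q → Fin L, (∀ a, e a ∉ F) ∧ (Matrix.of fun a m ↦ φ m (t (e a))).det ≠ 0 := by
  obtain ⟨L₀, hL₀⟩ :=
    exists_abs_sum_compl_sub_one_le hφ hortho N (η := 1 / (q + 1)) (by positivity)
  refine ⟨L₀, fun L hL t ht F hF ↦ ?_⟩
  let W : Matrix (Fᶜ : Finset (Fin L)) (Fin q) ℝ := Matrix.of fun j m ↦ φ m (t j)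
  have hgram : ∀ a b, ((L : ℝ)⁻¹ • (Wᵀ * W)) a b = (∑ j ∈ Fᶜ, φ a (t j) * φ b (t j)) / L := by
    intro a b
    simp only [W, Matrix.smul_apply, mul_apply, transpose_apply, of_apply, smul_eq_mul,
      inv_mul_eq_div]
    rw [sum_coe_sort Fᶜ fun j ↦ φ a (t j) * φ b (t j)]
  have hdet : (Wᵀ * W).det ≠ 0 := by
    have hq : (Fintype.card (Fin q) : ℝ) * (1 / (q + 1)) < 1 := by
      rw [Fintype.card_fin, mul_one_div, div_lt_one (by positivity)]
      linarith
    have := det_ne_zero_of_abs_sub_one_le hq fun a b ↦ hgram a b ▸ hL₀ L hL t ht F hF a b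
    rw [det_smul] at this
    exact right_ne_zero_of_mul this
  obtain ⟨e, he⟩ :=
    exists_det_ne_zero_of_span_eq_top (W.span_row_eq_top_of_det_transpose_mul_self_ne_zero hdet)
  exact ⟨fun a ↦ e a, fun a ↦ mem_compl.mp (e a).2, he⟩

namespace Matrix

theorem det_sub_det_of_eq_off_corner {R : Type*} [CommRing R] {n : ℕ}
    {M N : Matrix (Fin (n + 1)) (Fin (n + 1)) R} (h : ∀ a b, a ≠ 0 ∨ b ≠ 0 → M a b = N a b) :
    M.det - N.det = (M 0 0 - N 0 0) * (N.submatrix Fin.succ Fin.succ).det := by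
  have hminor : ∀ j : Fin (n + 1),
      M.submatrix Fin.succ j.succAbove = N.submatrix Fin.succ j.succAbove := fun j ↦
    Matrix.ext fun a b ↦ h _ _ (.inl (Fin.succ_ne_zero a))
  simp only [det_succ_row_zero M, det_succ_row_zero N, Fin.sum_univ_succ, hminor,
    h 0 _ (.inr (Fin.succ_ne_zero _)), Fin.succAbove_zero, Fin.val_zero, pow_zero]
  ring

theorem det_submatrix_eq_zero_of_rank_lt {m n K : Type*} [Fintype n] [Field K] {p : ℕ}
    (A : Matrix m n K) (h : A.rank < p) (r : Fin p → m) (c : Fin p → n) :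
    (A.submatrix r c).det = 0 := by
  by_contra hdet
  have hunit : IsUnit (A.submatrix r c) :=
    (isUnit_iff_isUnit_det _).mpr (isUnit_iff_ne_zero.mpr hdet)
  have := (rank_of_isUnit _ hunit).symm.trans_le (rank_submatrix_le A r c)
  rw [Fintype.card_fin] at this
  omega

theorem apply_self_eq_of_rank_le {n K : Type*} [Fintype n] [Field K] {q : ℕ}
    {Θ A : Matrix n n K} (hΘ : Θ.rank ≤ q) (hA : A.rank ≤ q)
    (hoff : ∀ i j, i ≠ j → Θ i j = A i j) {i : n} {r c : Fin q → n}
    (hr : ∀ a, r a ≠ i) (hc : ∀ b, c b ≠ i) (hrc : ∀ a b, r a ≠ c b)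
    (hdet : (A.submatrix r c).det ≠ 0) : Θ i i = A i i := by
  have hne : ∀ a b : Fin (q + 1), a ≠ 0 ∨ b ≠ 0 →
      (Fin.cons i r : Fin (q + 1) → n) a ≠ (Fin.cons i c : Fin (q + 1) → n) b := by
    intro a b hab
    cases a using Fin.cases <;> cases b using Fin.cases <;>
      simp_all [Ne.symm (hc _)]
  have key := det_sub_det_of_eq_off_corner (M := Θ.submatrix (Fin.cons i r) (Fin.cons i c))
    (N := A.submatrix (Fin.cons i r) (Fin.cons i c)) fun a b hab ↦ hoff _ _ (hne a b hab)
  rw [det_submatrix_eq_zero_of_rank_lt Θ (by omega), det_submatrix_eq_zero_of_rank_lt A (by omega),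
    sub_zero, eq_comm, submatrix_submatrix, Fin.cons_comp_succ, Fin.cons_comp_succ] at key
  simpa [sub_eq_zero, hdet] using key

theorem det_submatrix_mul_diagonal_mul_transpose {m n K : Type*} [Fintype n] [DecidableEq n]
    [CommRing K] (W : Matrix m n K) (d : n → K) (r c : n → m) :
    ((W * diagonal d * Wᵀ).submatrix r c).det
      = (W.submatrix r id).det * (∏ a, d a) * (W.submatrix c id).det := by
  rw [submatrix_mul _ _ _ id _ Function.bijective_id,
    submatrix_mul _ _ _ id _ Function.bijective_id, submatrix_id_id, ← transpose_submatrix,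
    det_mul, det_mul, det_diagonal, det_transpose]

end Matrix

theorem offdiagonal_identifiability_of_rank_eq_general
    (q : ℕ) (k : ℝ → ℝ → ℝ) (lam : Fin q → ℝ) (φ : Fin q → ℝ → ℝ)
    (hlam : ∀ m, 0 < lam m)
    (hφ : ∀ m, ContinuousOn (φ m) (Set.Icc 0 1))
    (hortho : ∀ i j, (∫ x in (0:ℝ)..1, φ i x * φ j x) = if i = j then 1 else 0)
    (hdecomp : ∀ s ∈ Set.Icc (0:ℝ) 1, ∀ t ∈ Set.Icc (0:ℝ) 1,
      k s t = ∑ m, lam m * φ m s * φ m t) :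
    ∃ Ldagger : ℕ, ∀ L : ℕ, Ldagger < L → ∀ t : Fin L → ℝ,
      (∀ j : Fin L, (j : ℝ) / L ≤ t j ∧ t j < ((j : ℝ) + 1) / L) →
      ∀ Θ : Matrix (Fin L) (Fin L) ℝ, Θ.rank ≤ q →
        (∀ i j, i ≠ j → Θ i j = k (t i) (t j)) →
        Θ = Matrix.of fun i j => k (t i) (t j) := by
  obtain ⟨L₀, hL₀⟩ := exists_det_eval_ne_zero_avoiding hφ hortho (q + 1)
  refine ⟨L₀, fun L hL t (ht : IsRegularGrid t) Θ hΘ hoff ↦ ?_⟩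
  let W : Matrix (Fin L) (Fin q) ℝ := Matrix.of fun j m ↦ φ m (t j)
  have hK : (Matrix.of fun i j ↦ k (t i) (t j)) = W * diagonal lam * Wᵀ := by
    ext i j
    rw [mul_apply]
    simp [W, hdecomp _ (ht.mem_Icc i) _ (ht.mem_Icc j), mul_diagonal, mul_comm]
  have hK_rank : (W * diagonal lam * Wᵀ).rank ≤ q :=
    (rank_mul_le_left _ _).trans ((rank_mul_le_left _ _).trans (rank_le_width W))
  replace hoff : ∀ i j, i ≠ j → Θ i j = (W * diagonal lam * Wᵀ) i j := by simpa [← hK] using hoff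
  rw [hK]
  ext i j
  rcases eq_or_ne i j with rfl | hij
  · obtain ⟨r, hr, hr_det⟩ := hL₀ L hL t ht {i} (by simp)
    obtain ⟨c, hc, hc_det⟩ := hL₀ L hL t ht (insert i (univ.image r))
      ((card_insert_le _ _).trans (Nat.succ_le_succ (card_image_le.trans_eq (card_fin q))))
    refine apply_self_eq_of_rank_le (r := r) (c := c) hΘ hK_rank hoff (fun a h ↦ hr a (by simp [h]))
      (fun b h ↦ hc b (by simp [h])) (fun a b h ↦ hc b (by simp [← h])) ?_
    rw [det_submatrix_mul_diagonal_mul_transpose]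
    exact mul_ne_zero (mul_ne_zero hr_det (prod_ne_zero_iff.mpr fun m _ ↦ (hlam m).ne')) hc_det
  · exact hoff i j hij

/-- Let `k` be a continuous kernel on `[0,1]²` of rank exactly `q ≥ 1`
(finite Mercer expansion with `q` terms, positive eigenvalues, continuous orthonormal
eigenfunctions). Then there is a critical grid size `L†` such that for every `L > L†`,
every regular grid `t₁,…,t_L`, and every `L × L` matrix `Θ` of rank at most `q` that agrees
with `(k(tᵢ,tⱼ))` off the diagonal, one has `Θ = (k(tᵢ,tⱼ))`: the covariance matrix is the
unique rank-`≤ q` matrix matching the off-diagonal entries. -/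
theorem offdiagonal_identifiability_of_rank_eq
    (q : ℕ) (hq : 1 ≤ q) (k : ℝ → ℝ → ℝ) (lam : Fin q → ℝ) (φ : Fin q → ℝ → ℝ)
    (hk : ContinuousOn (fun p : ℝ × ℝ => k p.1 p.2) (Set.Icc 0 1 ×ˢ Set.Icc 0 1))
    (hlam : ∀ m, 0 < lam m)
    (hφ : ∀ m, ContinuousOn (φ m) (Set.Icc 0 1))
    (hortho : ∀ i j, (∫ x in (0:ℝ)..1, φ i x * φ j x) = if i = j then 1 else 0)
    (hdecomp : ∀ s ∈ Set.Icc (0:ℝ) 1, ∀ t ∈ Set.Icc (0:ℝ) 1,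
      k s t = ∑ m, lam m * φ m s * φ m t) :
    ∃ Ldagger : ℕ, ∀ L : ℕ, Ldagger < L → ∀ t : Fin L → ℝ,
      (∀ j : Fin L, (j : ℝ) / L ≤ t j ∧ t j < ((j : ℝ) + 1) / L) →
      ∀ Θ : Matrix (Fin L) (Fin L) ℝ, Θ.rank ≤ q →
        (∀ i j, i ≠ j → Θ i j = k (t i) (t j)) →
        Θ = Matrix.of fun i j => k (t i) (t j) :=
  offdiagonal_identifiability_of_rank_eq_general q k lam φ hlam hφ hortho hdecomp
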